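/- Let ρ be C² and λ > 0, and set ρ_λ = e^{λρ} − 1. At boundary points z (ρ(z)=0) and complex tangential null directions W (W(ρ)(z) = 0, relevant for E), one has E_{ρ_λ}(z;W) = λ·L_ρ(z;W) + E_ρ(z;W). -/

import Mathlib

open Complex

noncomputable section

abbrev Cn (n : ℕ) := EuclideanSpace ℂ (Fin n)

/-- Wirtinger derivative in direction `W`: `W(f)(z) = ∑ⱼ (∂f/∂zⱼ)(z) wⱼ`. -/
def wD {n : ℕ} (f : Cn n → ℂ) (z W : Cn n) : ℂ :=
  (fderiv ℝ f z W - Complex.I * fderiv ℝ f z (Complex.I • W)) / 2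

/-- Conjugate Wirtinger derivative: `∑ₖ (∂f/∂z̄ₖ)(z) conj wₖ`. -/
def wbD {n : ℕ} (f : Cn n → ℂ) (z W : Cn n) : ℂ :=
  (fderiv ℝ f z W + Complex.I * fderiv ℝ f z (Complex.I • W)) / 2

/-- Complex Hessian `L_f(z; W, V̄) = ∑_{j,k} (∂²f/∂zⱼ∂z̄ₖ)(z) wⱼ v̄ₖ`. -/
def levi2 {n : ℕ} (f : Cn n → ℂ) (z W V : Cn n) : ℂ :=
  wD (fun t => wbD f t V) z W

/-- Complex Hessian of a real-valued function, `L_f(z;W)`. -/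
def leviR {n : ℕ} (f : Cn n → ℝ) (z W : Cn n) : ℝ :=
  (levi2 (fun t => (f t : ℂ)) z W W).re

/-- `W(f)(z)` for a real-valued `f`. -/
def wDR {n : ℕ} (f : Cn n → ℝ) (z W : Cn n) : ℂ :=
  wD (fun t => (f t : ℂ)) z W

/-- The real gradient `∇r(z)` of a real-valued `r`, written as a complex vector:
its `j`-th component is `2·∂r/∂z̄ⱼ = 2·conj(∂r/∂zⱼ)`. -/
def gradVec {n : ℕ} (r : Cn n → ℝ) (z : Cn n) : Cn n :=
  WithLp.toLp 2 (fun j => 2 * (starRingEnd ℂ) (wDR r z (EuclideanSpace.single j 1)) : Fin n → ℂ)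

/-- The normalized outward normal derivative `d g/dr (z) = (1/‖∇r‖)·dg/dn⃗(z)`. -/
def nDeriv {n : ℕ} (r : Cn n → ℝ) (g : Cn n → ℝ) (z : Cn n) : ℝ :=
  (1 / ‖fderiv ℝ r z‖ ^ 2) * fderiv ℝ g z (gradVec r z)

/-- `C_r(z;W)`: the normalized outward normal derivative of `t ↦ L_r(t;W)` at `z`. -/
def Cfun {n : ℕ} (r : Cn n → ℝ) (z W : Cn n) : ℝ :=
  nDeriv r (fun t => leviR r t W) z

/-- The complex normal field `N_r = (4/‖∇r‖²) ∑ⱼ (∂r/∂z̄ⱼ) ∂/∂zⱼ`. -/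
def Nvec {n : ℕ} (r : Cn n → ℝ) (z : Cn n) : Cn n :=
  ((2 / ‖fderiv ℝ r z‖ ^ 2 : ℝ) : ℂ) • gradVec r z

/-- `D_r(z;W) = L_r(z;W, conj N_r)`. -/
def Dfun {n : ℕ} (r : Cn n → ℝ) (z W : Cn n) : ℂ :=
  levi2 (fun t => (r t : ℂ)) z W (Nvec r z)

/-- `E_r(z;W) = C_r(z;W) − 2 Re( D_r(z;W) · conj(W)(ln‖∇r‖)(z) )`. -/
def Efun {n : ℕ} (r : Cn n → ℝ) (z W : Cn n) : ℝ :=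
  Cfun r z W -
    2 * (Dfun r z W * (starRingEnd ℂ) (wDR (fun t => Real.log ‖fderiv ℝ r t‖) z W)).re



section Aux
variable {n : ℕ}

lemma euclidean_decomp (V : Cn n) :
    V = ∑ j, ((V j).re • EuclideanSpace.single j (1:ℂ) + (V j).im • (Complex.I • EuclideanSpace.single j (1:ℂ))) := by
  ext i
  have h : (∑ j, ((V j).re • EuclideanSpace.single j (1:ℂ) + (V j).im • (Complex.I • EuclideanSpace.single j (1:ℂ)))) i
      = ∑ j, ((V j).re • EuclideanSpace.single j (1:ℂ) + (V j).im • (Complex.I • EuclideanSpace.single j (1:ℂ))) i :=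
    by rw [WithLp.ofLp_sum]; exact Finset.sum_apply i Finset.univ _
  rw [h]
  simp only [EuclideanSpace.single_apply, Complex.real_smul, PiLp.add_apply, PiLp.smul_apply,
    smul_eq_mul, mul_ite, mul_one, mul_zero]
  have h2 : ∀ x, ((if i = x then ((V x).re:ℂ) else 0) + if i = x then ((V x).im:ℂ) * I else 0)
      = if i = x then (V x : ℂ) else 0 := by
    intro x; split <;> simp_all [Complex.re_add_im]
  simp_rw [h2]
  simp

lemma hasFDerivAt_cast {u : Cn n → ℝ} {z : Cn n} (hu : DifferentiableAt ℝ u z) :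
    HasFDerivAt (fun t => ((u t : ℝ) : ℂ)) (Complex.ofRealCLM.comp (fderiv ℝ u z)) z :=
  Complex.ofRealCLM.hasFDerivAt.comp z hu.hasFDerivAt

lemma fderiv_cast {u : Cn n → ℝ} {z : Cn n} (hu : DifferentiableAt ℝ u z) :
    fderiv ℝ (fun t => ((u t : ℝ) : ℂ)) z = Complex.ofRealCLM.comp (fderiv ℝ u z) :=
  (hasFDerivAt_cast hu).fderiv

lemma wDR_eq {u : Cn n → ℝ} {z : Cn n} (hu : DifferentiableAt ℝ u z) (V : Cn n) :
    wDR u z V = (((fderiv ℝ u z V : ℝ):ℂ) - Complex.I * ((fderiv ℝ u z (Complex.I • V) : ℝ):ℂ)) / 2 := by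
  unfold wDR wD
  rw [fderiv_cast hu]
  rfl

lemma wbD_cast_eq {u : Cn n → ℝ} {z : Cn n} (hu : DifferentiableAt ℝ u z) (V : Cn n) :
    wbD (fun t => ((u t : ℝ):ℂ)) z V
      = (((fderiv ℝ u z V : ℝ):ℂ) + Complex.I * ((fderiv ℝ u z (Complex.I • V) : ℝ):ℂ)) / 2 := by
  unfold wbD
  rw [fderiv_cast hu]
  rfl

lemma wbD_cast_conj {u : Cn n → ℝ} {z : Cn n} (hu : DifferentiableAt ℝ u z) (V : Cn n) :
    wbD (fun t => ((u t : ℝ):ℂ)) z V = (starRingEnd ℂ) (wDR u z V) := by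
  rw [wbD_cast_eq hu, wDR_eq hu]
  simp [map_div₀, map_sub, map_mul, Complex.conj_I, Complex.conj_ofReal, map_ofNat]
  try ring

lemma wD_mul {f h : Cn n → ℂ} {z : Cn n} (hf : DifferentiableAt ℝ f z)
    (hh : DifferentiableAt ℝ h z) (W : Cn n) :
    wD (fun t => f t * h t) z W = wD f z W * h z + f z * wD h z W := by
  unfold wD
  rw [fderiv_fun_mul hf hh]
  simp only [ContinuousLinearMap.add_apply, ContinuousLinearMap.smul_apply, smul_eq_mul]
  ring

lemma fderiv_re_inner {r : Cn n → ℝ} {t : Cn n} (hr : DifferentiableAt ℝ r t) (V : Cn n) :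
    fderiv ℝ r t V = (inner ℂ (gradVec r t) V : ℂ).re := by
  conv_lhs => rw [euclidean_decomp V]
  rw [map_sum, PiLp.inner_apply, Complex.re_sum]
  refine Finset.sum_congr rfl (fun j _ => ?_)
  have hg : (starRingEnd ℂ) (gradVec r t j) = 2 * wDR r t (EuclideanSpace.single j 1) := by
    show (starRingEnd ℂ) (2 * (starRingEnd ℂ) (wDR r t (EuclideanSpace.single j 1))) = _
    simp [map_mul, map_ofNat]
  rw [RCLike.inner_apply, hg, wDR_eq hr]
  rw [map_add, map_smul, map_smul]
  simp only [smul_eq_mul]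
  set x := fderiv ℝ r t (EuclideanSpace.single j 1)
  set y := fderiv ℝ r t (Complex.I • EuclideanSpace.single j 1)
  have : (2:ℂ) * ((((x:ℝ):ℂ) - Complex.I * ((y:ℝ):ℂ)) / 2) = ((x:ℝ):ℂ) - Complex.I * ((y:ℝ):ℂ) := by ring
  rw [this]
  simp [Complex.mul_re, Complex.sub_re, Complex.sub_im, Complex.ofReal_re, Complex.ofReal_im]

lemma norm_fderiv_eq {r : Cn n → ℝ} {t : Cn n} (hr : DifferentiableAt ℝ r t) :
    ‖fderiv ℝ r t‖ = ‖gradVec r t‖ := by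
  set φ := fderiv ℝ r t with hφ
  set G := gradVec r t with hG
  have hpair : ∀ V, φ V = (inner ℂ G V : ℂ).re := fun V => fderiv_re_inner hr V
  have h1 : ‖φ‖ ≤ ‖G‖ := by
    refine ContinuousLinearMap.opNorm_le_bound _ (norm_nonneg G) (fun V => ?_)
    rw [hpair V, Real.norm_eq_abs]
    calc |(inner ℂ G V : ℂ).re| ≤ ‖(inner ℂ G V : ℂ)‖ := Complex.abs_re_le_norm _
    _ = ‖(inner ℂ G V : ℂ)‖ := rfl
    _ ≤ ‖G‖ * ‖V‖ := norm_inner_le_norm G V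
  have h2 : ‖G‖ ≤ ‖φ‖ := by
    rcases eq_or_ne G 0 with h | h
    · simp [h]
    · have hGpos : 0 < ‖G‖ := norm_pos_iff.mpr h
      have : ‖G‖ ^ 2 = φ G := by
        rw [hpair G]
        have := @inner_self_eq_norm_sq ℂ _ _ _ _ G
        rw [RCLike.re_to_complex] at this
        exact this.symm
      have h3 : φ G ≤ ‖φ‖ * ‖G‖ := by
        calc φ G ≤ ‖φ G‖ := le_abs_self _
        _ ≤ ‖φ‖ * ‖G‖ := φ.le_opNorm G
      nlinarith
  linarith

lemma fderiv_apply_grad {r : Cn n → ℝ} {t : Cn n} (hr : DifferentiableAt ℝ r t) :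
    fderiv ℝ r t (gradVec r t) = ‖fderiv ℝ r t‖ ^ 2 := by
  rw [fderiv_re_inner hr, norm_fderiv_eq hr]
  have := @inner_self_eq_norm_sq ℂ _ _ _ _ (gradVec r t)
  rw [RCLike.re_to_complex] at this
  exact this


lemma wD_const_mul {h : Cn n → ℂ} {z : Cn n} (a : ℂ) (hh : DifferentiableAt ℝ h z) (W : Cn n) :
    wD (fun t => a * h t) z W = a * wD h z W := by
  unfold wD
  rw [fderiv_const_mul hh a]
  simp only [ContinuousLinearMap.smul_apply, smul_eq_mul]
  ring

end Aux

section Smooth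
variable {n : ℕ} {ρ : Cn n → ℝ}

lemma contDiff_d1 (hρ : ContDiff ℝ (⊤ : ℕ∞) ρ) (V : Cn n) :
    ContDiff ℝ (⊤ : ℕ∞) (fun t => fderiv ℝ ρ t V) :=
  (hρ.fderiv_right (by simp)).clm_apply contDiff_const

lemma contDiff_wDR (hρ : ContDiff ℝ (⊤ : ℕ∞) ρ) (V : Cn n) :
    ContDiff ℝ (⊤ : ℕ∞) (fun t => wDR ρ t V) := by
  have h : (fun t => wDR ρ t V) = fun t =>
      (((fderiv ℝ ρ t V : ℝ):ℂ) - Complex.I * ((fderiv ℝ ρ t (Complex.I • V) : ℝ):ℂ)) / 2 :=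
    funext fun t => wDR_eq ((hρ.differentiable (by simp)) t) V
  rw [h]
  exact ((Complex.ofRealCLM.contDiff.comp (contDiff_d1 hρ V)).sub
    (contDiff_const.mul (Complex.ofRealCLM.contDiff.comp (contDiff_d1 hρ (Complex.I • V))))).div_const 2

lemma contDiff_wbD (hρ : ContDiff ℝ (⊤ : ℕ∞) ρ) (V : Cn n) :
    ContDiff ℝ (⊤ : ℕ∞) (fun t => wbD (fun x => ((ρ x : ℝ):ℂ)) t V) := by
  have h : (fun t => wbD (fun x => ((ρ x : ℝ):ℂ)) t V) = fun t =>
      (((fderiv ℝ ρ t V : ℝ):ℂ) + Complex.I * ((fderiv ℝ ρ t (Complex.I • V) : ℝ):ℂ)) / 2 :=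
    funext fun t => wbD_cast_eq ((hρ.differentiable (by simp)) t) V
  rw [h]
  exact ((Complex.ofRealCLM.contDiff.comp (contDiff_d1 hρ V)).add
    (contDiff_const.mul (Complex.ofRealCLM.contDiff.comp (contDiff_d1 hρ (Complex.I • V))))).div_const 2

lemma contDiff_levi2 (hρ : ContDiff ℝ (⊤ : ℕ∞) ρ) (W V : Cn n) :
    ContDiff ℝ (⊤ : ℕ∞) (fun t => levi2 (fun x => ((ρ x : ℝ):ℂ)) t W V) := by
  unfold levi2 wD
  exact ((((contDiff_wbD hρ V).fderiv_right (by simp)).clm_apply contDiff_const).sub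
    (contDiff_const.mul (((contDiff_wbD hρ V).fderiv_right (by simp)).clm_apply contDiff_const))).div_const 2

lemma contDiff_gradVec (hρ : ContDiff ℝ (⊤ : ℕ∞) ρ) : ContDiff ℝ (⊤ : ℕ∞) (gradVec ρ) := by
  have h : ContDiff ℝ (⊤ : ℕ∞) fun t =>
      (PiLp.continuousLinearEquiv 2 ℝ (fun _ : Fin n => ℂ)) (gradVec ρ t) := by
    rw [contDiff_pi]
    intro j
    show ContDiff ℝ (⊤ : ℕ∞) fun t => 2 * (starRingEnd ℂ) (wDR ρ t (EuclideanSpace.single j 1))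
    have hconj : ContDiff ℝ (⊤ : ℕ∞) fun t => (starRingEnd ℂ) (wDR ρ t (EuclideanSpace.single j 1)) := by
      have h4 := Complex.conjCLE.contDiff.comp (contDiff_wDR hρ (EuclideanSpace.single j 1))
      exact h4
    exact contDiff_const.mul hconj
  have h2 : gradVec ρ = fun t => (PiLp.continuousLinearEquiv 2 ℝ (fun _ : Fin n => ℂ)).symm
      ((PiLp.continuousLinearEquiv 2 ℝ (fun _ : Fin n => ℂ)) (gradVec ρ t)) := by
    funext t
    simp
  rw [h2]
  exact (PiLp.continuousLinearEquiv 2 ℝ (fun _ : Fin n => ℂ)).symm.contDiff.comp h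

end Smooth

theorem E_exp_rescaling {n : ℕ} (ρ : Cn n → ℝ) (hρ : ContDiff ℝ (⊤ : ℕ∞) ρ)
    (lam : ℝ) (hlam : 0 < lam)
    (ρlam : Cn n → ℝ) (hdef : ρlam = fun t => Real.exp (lam * ρ t) - 1)
    (z : Cn n) (hbdry : ρ z = 0) (hgrad : fderiv ℝ ρ z ≠ 0)
    (W : Cn n) (htang : wDR ρ z W = 0) :
    Efun ρlam z W = lam * leviR ρ z W + Efun ρ z W := by
  have hdρ : Differentiable ℝ ρ := hρ.differentiable (by simp)
  have hg : ContDiff ℝ (⊤ : ℕ∞) (fun t => Real.exp (lam * ρ t)) :=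
    Real.contDiff_exp.comp (contDiff_const.mul hρ)
  have hρlamCD : ContDiff ℝ (⊤ : ℕ∞) ρlam := by rw [hdef]; exact hg.sub contDiff_const
  have hdρlam : Differentiable ℝ ρlam := hρlamCD.differentiable (by simp)
  have hlamne : lam ≠ 0 := ne_of_gt hlam
  have hfd : ∀ t, fderiv ℝ ρlam t = (lam * Real.exp (lam * ρ t)) • fderiv ℝ ρ t := by
    intro t
    have h1 : HasFDerivAt (fun s => lam * ρ s) (lam • fderiv ℝ ρ t) t :=
      ((hdρ t).hasFDerivAt).const_mul lam
    have h2 : HasFDerivAt (fun s => Real.exp (lam * ρ s))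
        (Real.exp (lam * ρ t) • lam • fderiv ℝ ρ t) t :=
      h1.exp
    have h3 : HasFDerivAt ρlam (Real.exp (lam * ρ t) • lam • fderiv ℝ ρ t) t := by
      rw [hdef]; exact h2.sub_const 1
    rw [h3.fderiv, smul_smul, mul_comm]
  have hgz1 : Real.exp (lam * ρ z) = 1 := by rw [hbdry, mul_zero, Real.exp_zero]
  have hfdz : fderiv ℝ ρlam z = lam • fderiv ℝ ρ z := by rw [hfd z, hgz1, mul_one]
  have hnormz : ‖fderiv ℝ ρ z‖ ≠ 0 := norm_ne_zero_iff.mpr hgrad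
  have hnormlam : ‖fderiv ℝ ρlam z‖ = lam * ‖fderiv ℝ ρ z‖ := by
    rw [hfdz, norm_smul, Real.norm_eq_abs, abs_of_pos hlam]
  have hwDRlam : ∀ t V, wDR ρlam t V = ((lam * Real.exp (lam * ρ t) : ℝ):ℂ) * wDR ρ t V := by
    intro t V
    rw [wDR_eq (hdρlam t) V, wDR_eq (hdρ t) V, hfd t]
    simp only [ContinuousLinearMap.smul_apply, smul_eq_mul]
    push_cast
    ring
  have hwbDlam : ∀ t V, wbD (fun s => ((ρlam s : ℝ):ℂ)) t V
      = ((lam * Real.exp (lam * ρ t) : ℝ):ℂ) * wbD (fun s => ((ρ s : ℝ):ℂ)) t V := by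
    intro t V
    rw [wbD_cast_eq (hdρlam t) V, wbD_cast_eq (hdρ t) V, hfd t]
    simp only [ContinuousLinearMap.smul_apply, smul_eq_mul]
    push_cast
    ring
  have hgradlam : gradVec ρlam z = lam • gradVec ρ z := by
    ext j
    show 2 * (starRingEnd ℂ) (wDR ρlam z (EuclideanSpace.single j 1)) = (lam • gradVec ρ z) j
    have hrhs : (lam • gradVec ρ z) j
        = lam • (2 * (starRingEnd ℂ) (wDR ρ z (EuclideanSpace.single j 1))) := rfl
    rw [hrhs, hwDRlam z (EuclideanSpace.single j 1), hbdry, mul_zero, Real.exp_zero, mul_one,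
      map_mul, Complex.conj_ofReal, Complex.real_smul]
    ring
  have hcCD : ContDiff ℝ (⊤ : ℕ∞) (fun t => ((lam * Real.exp (lam * ρ t) : ℝ):ℂ)) :=
    Complex.ofRealCLM.contDiff.comp (contDiff_const.mul hg)
  have hcz : ((lam * Real.exp (lam * ρ z) : ℝ):ℂ) = (lam:ℂ) := by rw [hgz1, mul_one]
  have hcfd : ∀ t, fderiv ℝ (fun s => ((lam * Real.exp (lam * ρ s) : ℝ):ℂ)) t
      = Complex.ofRealCLM.comp ((lam * (lam * Real.exp (lam * ρ t))) • fderiv ℝ ρ t) := by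
    intro t
    have h1 : HasFDerivAt (fun s => lam * ρ s) (lam • fderiv ℝ ρ t) t :=
      ((hdρ t).hasFDerivAt).const_mul lam
    have h2 : HasFDerivAt (fun s => Real.exp (lam * ρ s))
        (Real.exp (lam * ρ t) • lam • fderiv ℝ ρ t) t :=
      h1.exp
    have h4 := h2.const_mul lam
    have e : lam • Real.exp (lam * ρ t) • lam • fderiv ℝ ρ t
        = (lam * (lam * Real.exp (lam * ρ t))) • fderiv ℝ ρ t := by
      rw [smul_smul, smul_smul]; congr 1; ring
    rw [e] at h4
    exact (Complex.ofRealCLM.hasFDerivAt.comp t h4).fderiv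
  have hwDc : ∀ t V, wD (fun s => ((lam * Real.exp (lam * ρ s) : ℝ):ℂ)) t V
      = (lam:ℂ) * ((lam * Real.exp (lam * ρ t) : ℝ):ℂ) * wDR ρ t V := by
    intro t V
    unfold wD
    rw [hcfd t, wDR_eq (hdρ t) V]
    simp only [ContinuousLinearMap.coe_comp', Function.comp_apply,
      ContinuousLinearMap.smul_apply, smul_eq_mul, Complex.ofRealCLM_apply]
    push_cast
    ring
  have hB : ∀ V, ContDiff ℝ (⊤ : ℕ∞) (fun s => wbD (fun x => ((ρ x : ℝ):ℂ)) s V) := contDiff_wbD hρ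
  have hstar : ∀ t V, levi2 (fun s => ((ρlam s : ℝ):ℂ)) t W V
      = (lam:ℂ) * ((lam * Real.exp (lam * ρ t) : ℝ):ℂ) * wDR ρ t W
          * wbD (fun s => ((ρ s : ℝ):ℂ)) t V
        + ((lam * Real.exp (lam * ρ t) : ℝ):ℂ) * levi2 (fun s => ((ρ s : ℝ):ℂ)) t W V := by
    intro t V
    unfold levi2
    have h1 : (fun s => wbD (fun x => ((ρlam x : ℝ):ℂ)) s V)
        = fun s => ((lam * Real.exp (lam * ρ s) : ℝ):ℂ) * wbD (fun x => ((ρ x : ℝ):ℂ)) s V :=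
      funext fun s => hwbDlam s V
    rw [h1, wD_mul (hcCD.differentiable (by simp) t) ((hB V).differentiable (by simp) t) W, hwDc t W]
  -- D term
  have hsmulC : ∀ (r : ℝ) (x : Cn n), ((r : ℝ):ℂ) • x = r • x := by
    intro r x
    rw [← Complex.coe_algebraMap, algebraMap_smul]
  have hwbD_rsmul : ∀ s (r : ℝ) V, wbD (fun x => ((ρ x : ℝ):ℂ)) s (r • V)
      = ((r : ℝ):ℂ) * wbD (fun x => ((ρ x : ℝ):ℂ)) s V := by
    intro s r V
    rw [wbD_cast_eq (hdρ s), wbD_cast_eq (hdρ s)]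
    rw [smul_comm Complex.I r V, map_smul, map_smul]
    simp only [smul_eq_mul]
    push_cast
    ring
  have hlevi_rsmul : ∀ (r : ℝ) V, levi2 (fun x => ((ρ x : ℝ):ℂ)) z W (r • V)
      = ((r : ℝ):ℂ) * levi2 (fun x => ((ρ x : ℝ):ℂ)) z W V := by
    intro r V
    unfold levi2
    have h1 : (fun s => wbD (fun x => ((ρ x : ℝ):ℂ)) s (r • V))
        = fun s => ((r : ℝ):ℂ) * wbD (fun x => ((ρ x : ℝ):ℂ)) s V :=
      funext fun s => hwbD_rsmul s r V
    rw [h1, wD_const_mul ((r : ℝ):ℂ) ((hB V).differentiable (by simp) z) W]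
  have hNlam : Nvec ρlam z = (1 / lam : ℝ) • Nvec ρ z := by
    unfold Nvec
    rw [hgradlam, hnormlam, hsmulC, hsmulC, smul_smul, smul_smul]
    congr 1
    field_simp
  have hlc : (lam:ℂ) ≠ 0 := Complex.ofReal_ne_zero.mpr hlamne
  have hDfun : Dfun ρlam z W = Dfun ρ z W := by
    unfold Dfun
    rw [hstar z (Nvec ρlam z), hcz, htang, hNlam, hlevi_rsmul (1/lam) (Nvec ρ z)]
    push_cast
    field_simp
    simp
  -- log term
  have hGne : gradVec ρ z ≠ 0 := by
    intro h
    exact hnormz (by rw [norm_fderiv_eq (hdρ z), h, norm_zero])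
  have hnormρfun : (fun t => ‖fderiv ℝ ρ t‖) = fun t => ‖gradVec ρ t‖ :=
    funext fun t => norm_fderiv_eq (hdρ t)
  have hnormdiff : DifferentiableAt ℝ (fun t => ‖fderiv ℝ ρ t‖) z := by
    rw [hnormρfun]
    exact DifferentiableAt.norm ℂ ((contDiff_gradVec hρ).differentiable (by simp) z) hGne
  have hlogdiff : DifferentiableAt ℝ (fun t => Real.log ‖fderiv ℝ ρ t‖) z :=
    hnormdiff.log hnormz
  have hnormlamt : ∀ t, ‖fderiv ℝ ρlam t‖ = lam * Real.exp (lam * ρ t) * ‖fderiv ℝ ρ t‖ := by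
    intro t
    rw [hfd t, norm_smul, Real.norm_eq_abs, abs_of_pos (by positivity)]
  have hev : (fun t => Real.log ‖fderiv ℝ ρlam t‖)
      =ᶠ[nhds z] fun t => (Real.log lam + lam * ρ t) + Real.log ‖fderiv ℝ ρ t‖ := by
    filter_upwards [hnormdiff.continuousAt.eventually_ne hnormz] with t ht
    rw [hnormlamt t, Real.log_mul (by positivity) ht,
      Real.log_mul hlamne (Real.exp_ne_zero _), Real.log_exp]
  have hdiff2 : DifferentiableAt ℝ
      (fun t => (Real.log lam + lam * ρ t) + Real.log ‖fderiv ℝ ρ t‖) z :=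
    (((hdρ z).const_mul lam).const_add (Real.log lam)).add hlogdiff
  have hdiff1 : DifferentiableAt ℝ (fun t => Real.log ‖fderiv ℝ ρlam t‖) z :=
    hdiff2.congr_of_eventuallyEq hev
  have hfdev : fderiv ℝ (fun t => Real.log ‖fderiv ℝ ρlam t‖) z
      = lam • fderiv ℝ ρ z + fderiv ℝ (fun t => Real.log ‖fderiv ℝ ρ t‖) z := by
    rw [hev.fderiv_eq, fderiv_fun_add (((hdρ z).const_mul lam).const_add (Real.log lam)) hlogdiff]
    congr 1
    rw [fderiv_const_add, fderiv_const_mul (hdρ z)]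
  have hwlog : wDR (fun t => Real.log ‖fderiv ℝ ρlam t‖) z W
      = wDR (fun t => Real.log ‖fderiv ℝ ρ t‖) z W := by
    rw [wDR_eq hdiff1 W, wDR_eq hlogdiff W, hfdev]
    have h0 := htang
    rw [wDR_eq (hdρ z) W] at h0
    simp only [ContinuousLinearMap.add_apply, ContinuousLinearMap.smul_apply, smul_eq_mul]
    push_cast
    push_cast at h0
    linear_combination (lam:ℂ) * h0
  -- C term
  have hLd : DifferentiableAt ℝ (fun t => levi2 (fun x => ((ρ x : ℝ):ℂ)) t W W) z :=
    (contDiff_levi2 hρ W W).differentiable (by simp) z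
  have haCD : ContDiff ℝ (⊤ : ℕ∞) (fun t => wDR ρ t W) := contDiff_wDR hρ W
  have hbz : wbD (fun x => ((ρ x : ℝ):ℂ)) z W = 0 := by
    rw [wbD_cast_conj (hdρ z) W, htang, map_zero]
  have hFfun : (fun t => leviR ρlam t W) = fun t =>
      ((lam:ℂ) * ((lam * Real.exp (lam * ρ t) : ℝ):ℂ) * wDR ρ t W
          * wbD (fun x => ((ρ x : ℝ):ℂ)) t W
        + ((lam * Real.exp (lam * ρ t) : ℝ):ℂ) * levi2 (fun x => ((ρ x : ℝ):ℂ)) t W W).re := by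
    funext t
    unfold leviR
    rw [hstar t W]
  have hproddiff : DifferentiableAt ℝ (fun t =>
      (lam:ℂ) * ((lam * Real.exp (lam * ρ t) : ℝ):ℂ) * wDR ρ t W
        * wbD (fun x => ((ρ x : ℝ):ℂ)) t W) z :=
    ((((contDiff_const.mul hcCD).mul haCD).mul (hB W)).differentiable (by simp)) z
  have hFdiff : DifferentiableAt ℝ (fun t =>
      (lam:ℂ) * ((lam * Real.exp (lam * ρ t) : ℝ):ℂ) * wDR ρ t W
          * wbD (fun x => ((ρ x : ℝ):ℂ)) t W
        + ((lam * Real.exp (lam * ρ t) : ℝ):ℂ) * levi2 (fun x => ((ρ x : ℝ):ℂ)) t W W) z :=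
    hproddiff.add ((hcCD.differentiable (by simp) z).mul hLd)
  have hfdF : fderiv ℝ (fun t =>
      (lam:ℂ) * ((lam * Real.exp (lam * ρ t) : ℝ):ℂ) * wDR ρ t W
          * wbD (fun x => ((ρ x : ℝ):ℂ)) t W
        + ((lam * Real.exp (lam * ρ t) : ℝ):ℂ) * levi2 (fun x => ((ρ x : ℝ):ℂ)) t W W) z
      = (lam:ℂ) • fderiv ℝ (fun t => levi2 (fun x => ((ρ x : ℝ):ℂ)) t W W) z
        + (levi2 (fun x => ((ρ x : ℝ):ℂ)) z W W)
            • fderiv ℝ (fun s => ((lam * Real.exp (lam * ρ s) : ℝ):ℂ)) z := by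
    rw [fderiv_fun_add hproddiff ((hcCD.differentiable (by simp) z).fun_mul hLd)]
    have h1 : fderiv ℝ (fun t =>
        (lam:ℂ) * ((lam * Real.exp (lam * ρ t) : ℝ):ℂ) * wDR ρ t W
          * wbD (fun x => ((ρ x : ℝ):ℂ)) t W) z = 0 := by
      rw [fderiv_fun_mul ((((contDiff_const.mul hcCD).mul haCD).differentiable (by simp)) z)
        (((hB W).differentiable (by simp)) z), htang, hbz]
      ext v; simp
    rw [h1, zero_add, fderiv_fun_mul (hcCD.differentiable (by simp) z) hLd, hcz]
  have hReF : fderiv ℝ (fun t =>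
      ((lam:ℂ) * ((lam * Real.exp (lam * ρ t) : ℝ):ℂ) * wDR ρ t W
          * wbD (fun x => ((ρ x : ℝ):ℂ)) t W
        + ((lam * Real.exp (lam * ρ t) : ℝ):ℂ) * levi2 (fun x => ((ρ x : ℝ):ℂ)) t W W).re) z
      = Complex.reCLM.comp (fderiv ℝ (fun t =>
          (lam:ℂ) * ((lam * Real.exp (lam * ρ t) : ℝ):ℂ) * wDR ρ t W
            * wbD (fun x => ((ρ x : ℝ):ℂ)) t W
          + ((lam * Real.exp (lam * ρ t) : ℝ):ℂ) * levi2 (fun x => ((ρ x : ℝ):ℂ)) t W W) z) :=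
    (Complex.reCLM.hasFDerivAt.comp z hFdiff.hasFDerivAt).fderiv
  have hReL : fderiv ℝ (fun t => leviR ρ t W) z
      = Complex.reCLM.comp (fderiv ℝ (fun t => levi2 (fun x => ((ρ x : ℝ):ℂ)) t W W) z) := by
    have h : (fun t => leviR ρ t W)
        = fun t => Complex.reCLM (levi2 (fun x => ((ρ x : ℝ):ℂ)) t W W) := by
      funext t
      simp [leviR, Complex.reCLM_apply]
    rw [h]
    exact (Complex.reCLM.hasFDerivAt.comp z hLd.hasFDerivAt).fderiv
  have hdG : fderiv ℝ ρ z (gradVec ρ z) = ‖fderiv ℝ ρ z‖ ^ 2 := fderiv_apply_grad (hdρ z)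
  have hClam : Cfun ρlam z W = lam * leviR ρ z W + Cfun ρ z W := by
    unfold Cfun nDeriv
    rw [hFfun, hReF, hfdF, hgradlam, hnormlam, hReL]
    unfold leviR
    simp only [ContinuousLinearMap.coe_comp', Function.comp_apply,
      ContinuousLinearMap.add_apply, ContinuousLinearMap.smul_apply, map_smul, hcfd z,
      hbdry, mul_zero, Real.exp_zero, mul_one, Complex.ofRealCLM_apply,
      Complex.reCLM_apply, smul_eq_mul]
    rw [hdG]
    simp only [Complex.real_smul, Complex.smul_re, Complex.add_re, Complex.mul_re,
      Complex.ofReal_re, Complex.ofReal_im, Complex.mul_im]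
    field_simp
    ring
  unfold Efun
  rw [hClam, hDfun, hwlog]
  ring
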